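/- arXiv:1512.01684 — 3 statements merged into one kernel-verified Lean document; each statement's English description precedes it below -/
import Mathlib

section
/- If a positive sequence (M_p) with M_0 = 1 is logarithmically convex (M_p^2 ≤ M_{p-1} M_{p+1} for all p ≥ 1) and for every l > 0 there exists C_l > 0 such that √(p!) ≤ C_l l^p M_p for all p, then √(p+1) · M_p / M_{p+1} → 0 as p → ∞. -/
open Real Filter

lemma sqrt_pow_aux (a : ℝ) (ha : 0 ≤ a) (n : ℕ) :
    Real.sqrt (a ^ n) = Real.sqrt a ^ n := by
  rw [show a ^ n = (Real.sqrt a ^ n) ^ 2 by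
        rw [← pow_mul, mul_comm n 2, pow_mul, Real.sq_sqrt ha],
    Real.sqrt_sq (pow_nonneg (Real.sqrt_nonneg a) n)]

theorem stmt_1 (M : ℕ → ℝ) (hMpos : ∀ p, 0 < M p) (hM0 : M 0 = 1)
    (hlc : ∀ p : ℕ, 1 ≤ p → (M p) ^ 2 ≤ M (p - 1) * M (p + 1))
    (hnt : ∀ l : ℝ, 0 < l → ∃ C : ℝ, 0 < C ∧
      ∀ p : ℕ, Real.sqrt (Nat.factorial p) ≤ C * l ^ p * M p) :
    Filter.Tendsto (fun p : ℕ => Real.sqrt (p + 1) * M p / M (p + 1))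
      Filter.atTop (nhds 0) := by
  have hfpos : ∀ k, 0 < M (k + 1) / M k := fun k => div_pos (hMpos _) (hMpos _)
  have hf : Monotone (fun k => M (k + 1) / M k) := by
    apply monotone_nat_of_le_succ
    intro k
    have h := hlc (k + 1) (by omega)
    simp only [Nat.add_sub_cancel] at h
    rw [div_le_div_iff₀ (hMpos k) (hMpos (k + 1))]
    nlinarith [hMpos k, hMpos (k + 1), hMpos (k + 2)]
  have key : ∀ n, M (n + 1) ≤ (M (n + 1) / M n) ^ (n + 1) := by
    intro n
    induction n with
    | zero => simp [hM0]
    | succ n ih =>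
      have h1 : M (n + 2) = (M (n + 2) / M (n + 1)) * M (n + 1) :=
        (div_mul_cancel₀ _ (hMpos (n + 1)).ne').symm
      have h2 : (M (n + 1) / M n) ^ (n + 1) ≤ (M (n + 2) / M (n + 1)) ^ (n + 1) :=
        pow_le_pow_left₀ (hfpos n).le (hf (Nat.le_succ n)) _
      calc M (n + 2) = (M (n + 2) / M (n + 1)) * M (n + 1) := h1
        _ ≤ (M (n + 2) / M (n + 1)) * (M (n + 2) / M (n + 1)) ^ (n + 1) :=
            mul_le_mul_of_nonneg_left (ih.trans h2) (hfpos (n + 1)).le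
        _ = (M (n + 2) / M (n + 1)) ^ (n + 2) := by ring
  have hsqrte : Real.sqrt (Real.exp 1) ≤ 2 := by
    rw [show (2 : ℝ) = Real.sqrt 4 by
      rw [show (4 : ℝ) = 2 ^ 2 by norm_num, Real.sqrt_sq (by norm_num)]]
    exact Real.sqrt_le_sqrt (by nlinarith [Real.exp_one_lt_d9])
  rw [Metric.tendsto_atTop]
  intro ε hε
  set K : ℝ := 2 / ε with hKdef
  have hKpos : 0 < K := by positivity
  set l : ℝ := 1 / (4 * K) with hldef
  have hlpos : 0 < l := by positivity
  obtain ⟨C, hC, hCb⟩ := hnt l hlpos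
  obtain ⟨N, hN⟩ := pow_unbounded_of_one_lt C (one_lt_two (α := ℝ))
  refine ⟨N, fun p hp => ?_⟩
  -- main claim: K * sqrt (p+1) ≤ M (p+1) / M p
  have hsp : (0 : ℝ) < Real.sqrt (p + 1) := Real.sqrt_pos.2 (by positivity)
  have hclaim : K * Real.sqrt (p + 1) ≤ M (p + 1) / M p := by
    by_contra hcon
    push_neg at hcon
    have h1 : M (p + 1) ≤ (K * Real.sqrt (p + 1)) ^ (p + 1) :=
      (key p).trans (pow_le_pow_left₀ (hfpos p).le hcon.le _)
    have h2 : Real.sqrt (Nat.factorial (p + 1)) ≤ C * (l * (K * Real.sqrt (p + 1))) ^ (p + 1) := by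
      calc Real.sqrt (Nat.factorial (p + 1)) ≤ C * l ^ (p + 1) * M (p + 1) := hCb (p + 1)
        _ ≤ C * l ^ (p + 1) * (K * Real.sqrt (p + 1)) ^ (p + 1) := by
            exact mul_le_mul_of_nonneg_left h1 (by positivity)
        _ = C * (l * (K * Real.sqrt (p + 1))) ^ (p + 1) := by rw [mul_assoc, ← mul_pow]
    -- lower bound on sqrt of factorial
    have hfac : ((p + 1 : ℝ) / Real.exp 1) ^ (p + 1) ≤ (Nat.factorial (p + 1) : ℝ) := by
      have h := Real.pow_div_factorial_le_exp (x := (p + 1 : ℝ)) (by positivity) (p + 1)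
      have hfacpos : (0 : ℝ) < (Nat.factorial (p + 1) : ℝ) := by
        exact_mod_cast Nat.factorial_pos (p + 1)
      rw [div_le_iff₀ hfacpos] at h
      rw [div_pow, div_le_iff₀ (by positivity)]
      calc ((p + 1 : ℝ)) ^ (p + 1) ≤ Real.exp (p + 1) * (Nat.factorial (p + 1) : ℝ) := h
        _ = (Nat.factorial (p + 1) : ℝ) * Real.exp 1 ^ (p + 1) := by
            rw [← Real.exp_nat_mul]
            push_cast
            ring_nf
    have h3 : (Real.sqrt (p + 1) / 2) ^ (p + 1) ≤ Real.sqrt (Nat.factorial (p + 1)) := by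
      have : Real.sqrt (((p + 1 : ℝ) / Real.exp 1) ^ (p + 1)) ≤
          Real.sqrt (Nat.factorial (p + 1)) := Real.sqrt_le_sqrt hfac
      rw [sqrt_pow_aux _ (by positivity), Real.sqrt_div (by positivity)] at this
      · refine le_trans (pow_le_pow_left₀ (by positivity) ?_ _) this
        apply div_le_div_of_nonneg_left hsp.le (by positivity) hsqrte
    -- combine
    have hlK : l * K = 1 / 4 := by
      rw [hldef]; field_simp
    have h4 : (Real.sqrt (p + 1) / 2) ^ (p + 1) ≤
        C * (Real.sqrt (p + 1) / 2) ^ (p + 1) / 2 ^ (p + 1) := by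
      calc (Real.sqrt (p + 1) / 2) ^ (p + 1) ≤ C * (l * (K * Real.sqrt (p + 1))) ^ (p + 1) :=
            h3.trans h2
        _ = C * (Real.sqrt (p + 1) / 2) ^ (p + 1) / 2 ^ (p + 1) := by
            rw [show l * (K * Real.sqrt (p + 1)) = Real.sqrt (p + 1) / 2 / 2 by
              rw [← mul_assoc, hlK]; ring]
            rw [div_pow, div_pow]
            ring
    have h5 : (2 : ℝ) ^ (p + 1) ≤ C := by
      have hpow : (0 : ℝ) < (Real.sqrt (p + 1) / 2) ^ (p + 1) := by positivity
      rw [le_div_iff₀ (by positivity)] at h4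
      nlinarith
    have h6 : C < (2 : ℝ) ^ (p + 1) :=
      hN.trans_le (pow_le_pow_right₀ one_le_two (by omega))
    linarith
  -- finish
  have hterm : Real.sqrt (p + 1) * M p / M (p + 1) = Real.sqrt (p + 1) / (M (p + 1) / M p) := by
    field_simp
  rw [Real.dist_eq, sub_zero,
    abs_of_nonneg (div_nonneg (mul_nonneg (Real.sqrt_nonneg _) (hMpos p).le) (hMpos (p + 1)).le),
    hterm]
  have hfp : 0 < M (p + 1) / M p := hfpos p
  calc Real.sqrt (p + 1) / (M (p + 1) / M p) ≤ Real.sqrt (p + 1) / (K * Real.sqrt (p + 1)) :=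
        div_le_div_of_nonneg_left hsp.le (by positivity) hclaim
    _ = 1 / K := by rw [mul_comm, ← div_div, div_self hsp.ne']
    _ = ε / 2 := by rw [hKdef]; field_simp
    _ < ε := by linarith
end

section
/- For integers m ≥ 1, j ≥ 3, and 0 ≤ k ≤ m, one has (jm)(jm−1)⋯(jm−k+1) / √((jm)(jm−1)⋯(jm−2k+1)) ≤ (jm/((j−2)m))^m ≤ 3^m. -/
open Finset Real

theorem stmt_12 (m j k : ℕ) (hm : 1 ≤ m) (hj : 3 ≤ j) (hk : k ≤ m) :
    ((Nat.factorial (j * m) : ℝ) / (Nat.factorial (j * m - k))) /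
        Real.sqrt ((Nat.factorial (j * m) : ℝ) / (Nat.factorial (j * m - 2 * k))) ≤
      (((j : ℝ) * m) / (((j : ℝ) - 2) * m)) ^ m ∧
    (((j : ℝ) * m) / (((j : ℝ) - 2) * m)) ^ m ≤ 3 ^ m := by
  have hj2 : (3:ℝ) ≤ (j:ℝ) := by exact_mod_cast hj
  have hm1 : (1:ℝ) ≤ (m:ℝ) := by exact_mod_cast hm
  have hden : (0:ℝ) < ((j:ℝ) - 2) * m := by nlinarith
  set R : ℝ := ((j : ℝ) * m) / (((j : ℝ) - 2) * m) with hR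
  have hR1 : 1 ≤ R := by
    rw [hR, le_div_iff₀ hden]; nlinarith
  have hR3 : R ≤ 3 := by
    rw [hR, div_le_iff₀ hden]; nlinarith
  have hN : (j : ℝ) * m = ((j * m : ℕ) : ℝ) := by push_cast; ring
  have hkN : k ≤ j * m := le_trans hk (by nlinarith)
  have h2kN : 2 * k ≤ j * m := by nlinarith
  constructor
  · -- main inequality
    have e : ∀ l, l ≤ j * m → ((j * m).factorial : ℝ) / ((j * m - l).factorial : ℝ)
        = ∏ i ∈ Finset.range l, ((j:ℝ) * m - i) := by
      intro l hl
      have h1 : ((j * m - l).factorial : ℝ) ≠ 0 := by positivity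
      rw [div_eq_iff h1]
      have h2 := Nat.factorial_mul_descFactorial hl
      have h3 : ((j * m).descFactorial l : ℝ) = ∏ i ∈ Finset.range l, ((j:ℝ) * m - i) := by
        rw [Nat.descFactorial_eq_prod_range, Nat.cast_prod]
        refine Finset.prod_congr rfl fun i hi => ?_
        rw [Nat.cast_sub (le_trans (le_of_lt (Finset.mem_range.mp hi)) hl)]
        push_cast; ring
      rw [← h3, ← Nat.cast_mul]
      exact_mod_cast (h2.symm.trans (mul_comm _ _))
    rw [e k hkN, e (2*k) h2kN]
    set f : ℕ → ℝ := fun i => (j:ℝ) * m - i with hf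
    have hfpos : ∀ i, i < 2 * k → 0 < f i := by
      intro i hi
      have : (i:ℝ) < (j:ℝ) * m := by
        have : (i : ℝ) < (2*k : ℕ) := by exact_mod_cast hi
        have h2 : ((2*k : ℕ) : ℝ) ≤ ((j*m : ℕ) : ℝ) := by exact_mod_cast h2kN
        rw [hN]; linarith
      simp only [hf]; linarith
    set A : ℝ := ∏ i ∈ Finset.range k, f i with hA
    set B : ℝ := ∏ i ∈ Finset.range k, f (k + i) with hB
    have hsplit : ∏ i ∈ Finset.range (2*k), f i = A * B := by
      rw [two_mul, Finset.prod_range_add]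
    have hApos : 0 < A := Finset.prod_pos fun i hi => hfpos i (by
      have := Finset.mem_range.mp hi; omega)
    have hBpos : 0 < B := Finset.prod_pos fun i hi => hfpos (k + i) (by
      have := Finset.mem_range.mp hi; omega)
    -- key : A ≤ R^k * B
    have hkey : A ≤ R ^ k * B := by
      have : A ≤ ∏ i ∈ Finset.range k, (R * f (k + i)) := by
        refine Finset.prod_le_prod (fun i hi => le_of_lt (hfpos i (by
          have := Finset.mem_range.mp hi; omega))) (fun i hi => ?_)
        have hik := Finset.mem_range.mp hi
        have h1 : f i ≤ (j:ℝ) * m := by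
          simp only [hf]
          have : (0:ℝ) ≤ i := Nat.cast_nonneg i
          linarith
        have h2 : ((j:ℝ) - 2) * m ≤ f (k + i) := by
          simp only [hf]
          have : ((k + i : ℕ) : ℝ) ≤ 2 * m := by
            have : k + i ≤ 2 * m := by omega
            exact_mod_cast this
          push_cast
          push_cast at this
          nlinarith
        have h3 : R * (((j:ℝ) - 2) * m) = (j:ℝ) * m := by
          rw [hR, div_mul_cancel₀ _ (ne_of_gt hden)]
        calc f i ≤ (j:ℝ) * m := h1
          _ = R * (((j:ℝ) - 2) * m) := h3.symm
          _ ≤ R * f (k + i) := by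
              have hR0 : 0 < R := by linarith
              exact mul_le_mul_of_nonneg_left h2 (le_of_lt hR0)
      rwa [Finset.prod_mul_distrib, Finset.prod_const, Finset.card_range] at this
    have hAB : A ≤ R ^ (2 * m) * B := by
      have : R ^ k ≤ R ^ (2 * m) := pow_le_pow_right₀ hR1 (by omega)
      nlinarith
    rw [hsplit, div_le_iff₀ (Real.sqrt_pos.mpr (by positivity))]
    have hRm : (0:ℝ) ≤ R ^ m := by positivity
    have hrhs : Real.sqrt ((R ^ m) ^ 2 * (A * B)) = R ^ m * Real.sqrt (A * B) := by
      rw [Real.sqrt_mul (sq_nonneg _), Real.sqrt_sq hRm]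
    rw [← hrhs]
    have hA' : A = Real.sqrt (A ^ 2) := (Real.sqrt_sq hApos.le).symm
    rw [hA']
    apply Real.sqrt_le_sqrt
    have : (R ^ m) ^ 2 = R ^ (2 * m) := by rw [← pow_mul]; ring_nf
    rw [this]
    nlinarith
  · exact pow_le_pow_left₀ (by linarith) hR3 m
end

section
/- Let a = (a_j)_{j≥1} be a sequence of complex numbers and let M̃ : (0,∞) → ℝ be a function satisfying e^{M̃(t)} ≤ K · e^{M̃(Lt)} / t^{2n} for all t > 0, for constants K > 0, L ≥ 1 and integer n ≥ 1. Then for every h > 0, ‖(a_j e^{M̃(j^{1/(2n)}/h)})_j‖_{ℓ²} = (Σ_{j=1}^∞ |a_j|^2 e^{2M̃(j^{1/(2n)}/h)})^{1/2} ≤ (π/√6) · K h^{2n} · sup_j |a_j| e^{M̃(j^{1/(2n)}/(h/L))}. In particular, the sup norm with parameter h/L controls the ℓ² norm with parameter h. -/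
theorem stmt_14 (a : ℕ → ℂ) (Mt : ℝ → ℝ) (K L : ℝ) (n : ℕ)
    (hK : 0 < K) (hL : 1 ≤ L) (hn : 1 ≤ n)
    (hineq : ∀ t : ℝ, 0 < t →
      Real.exp (Mt t) ≤ K * Real.exp (Mt (L * t)) / t ^ (2 * n))
    (hbdd : ∀ h : ℝ, 0 < h → BddAbove (Set.range fun j : ℕ =>
      ‖a (j + 1)‖ * Real.exp (Mt (((j : ℝ) + 1) ^ ((1 : ℝ) / (2 * n)) / h)))) :
    ∀ h : ℝ, 0 < h →
      Real.sqrt (∑' j : ℕ,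
          (‖a (j + 1)‖ * Real.exp (Mt (((j : ℝ) + 1) ^ ((1 : ℝ) / (2 * n)) / h))) ^ 2) ≤
        Real.pi / Real.sqrt 6 * K * h ^ (2 * n) *
          ⨆ j : ℕ, ‖a (j + 1)‖ *
            Real.exp (Mt (((j : ℝ) + 1) ^ ((1 : ℝ) / (2 * n)) / (h / L))) := by
  intro h hh
  have hL0 : (0 : ℝ) < L := lt_of_lt_of_le one_pos hL
  have hhL : 0 < h / L := div_pos hh hL0
  set c : ℕ → ℝ := fun j => ‖a (j + 1)‖ *
      Real.exp (Mt (((j : ℝ) + 1) ^ ((1 : ℝ) / (2 * n)) / (h / L))) with hc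
  set b : ℕ → ℝ := fun j => ‖a (j + 1)‖ *
      Real.exp (Mt (((j : ℝ) + 1) ^ ((1 : ℝ) / (2 * n)) / h)) with hb
  have hbd : BddAbove (Set.range c) := hbdd (h / L) hhL
  set S := ⨆ j, c j with hS
  have hcS : ∀ j, c j ≤ S := fun j => le_ciSup hbd j
  have hS0 : (0 : ℝ) ≤ S := le_trans (by positivity) (hcS 0)
  set C := K * h ^ (2 * n) * S with hC
  have hC0 : (0 : ℝ) ≤ C := by positivity
  have key : ∀ j : ℕ, b j ≤ C / ((j : ℝ) + 1) := by
    intro j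
    have hj1 : (0 : ℝ) < (j : ℝ) + 1 := by positivity
    set x : ℝ := ((j : ℝ) + 1) ^ ((1 : ℝ) / (2 * n)) with hx
    have hx0 : 0 < x := Real.rpow_pos_of_pos hj1 _
    have ht : 0 < x / h := div_pos hx0 hh
    have hn0 : (0 : ℝ) < 2 * (n : ℝ) := by
      have : (1 : ℝ) ≤ (n : ℝ) := by exact_mod_cast hn
      linarith
    have hpow : x ^ (2 * n) = (j : ℝ) + 1 := by
      rw [hx, ← Real.rpow_natCast (((j : ℝ) + 1) ^ ((1 : ℝ) / (2 * n))) (2 * n),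
        ← Real.rpow_mul hj1.le]
      have h2n : ((2 * n : ℕ) : ℝ) = 2 * (n : ℝ) := by push_cast; ring
      rw [h2n, one_div, inv_mul_cancel₀ hn0.ne', Real.rpow_one]
    have hLt : L * (x / h) = x / (h / L) := by
      field_simp
    have h1 := hineq (x / h) ht
    rw [hLt] at h1
    have h2 : (x / h) ^ (2 * n) = ((j : ℝ) + 1) / h ^ (2 * n) := by
      rw [div_pow, hpow]
    rw [h2] at h1
    have h3 : b j ≤ ‖a (j + 1)‖ *
        (K * Real.exp (Mt (x / (h / L))) / (((j : ℝ) + 1) / h ^ (2 * n))) := by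
      exact mul_le_mul_of_nonneg_left h1 (norm_nonneg _)
    calc b j ≤ ‖a (j + 1)‖ *
        (K * Real.exp (Mt (x / (h / L))) / (((j : ℝ) + 1) / h ^ (2 * n))) := h3
      _ = K * h ^ (2 * n) / ((j : ℝ) + 1) * c j := by
          rw [hc]
          show _ = K * h ^ (2 * n) / ((j : ℝ) + 1) * (‖a (j + 1)‖ * Real.exp (Mt (x / (h / L))))
          field_simp
      _ ≤ K * h ^ (2 * n) / ((j : ℝ) + 1) * S := by
          apply mul_le_mul_of_nonneg_left (hcS j)
          positivity
      _ = C / ((j : ℝ) + 1) := by rw [hC]; ring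
  -- Basel sum
  have hbasel : HasSum (fun j : ℕ => (1 : ℝ) / ((j : ℝ) + 1) ^ 2)
      (Real.pi ^ 2 / 6) := by
    have h0 := (hasSum_nat_add_iff' (f := fun n : ℕ => (1 : ℝ) / (n : ℝ) ^ 2) 1).mpr
      hasSum_zeta_two
    simpa using h0
  have hCsum : HasSum (fun j : ℕ => (C / ((j : ℝ) + 1)) ^ 2)
      (C ^ 2 * (Real.pi ^ 2 / 6)) := by
    have := hbasel.mul_left (C ^ 2)
    have e : (fun j : ℕ => (C / ((j : ℝ) + 1)) ^ 2) =
        fun j : ℕ => C ^ 2 * (1 / ((j : ℝ) + 1) ^ 2) := by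
      funext j
      rw [div_pow]
      ring
    rw [e]; exact this
  have hb0 : ∀ j, 0 ≤ b j := fun j => by positivity
  have hble : ∀ j, b j ^ 2 ≤ (C / ((j : ℝ) + 1)) ^ 2 := by
    intro j
    exact pow_le_pow_left₀ (hb0 j) (key j) 2
  have hbsum : Summable (fun j : ℕ => b j ^ 2) :=
    Summable.of_nonneg_of_le (fun j => sq_nonneg _) hble hCsum.summable
  have htsum : (∑' j : ℕ, b j ^ 2) ≤ C ^ 2 * (Real.pi ^ 2 / 6) := by
    rw [← hCsum.tsum_eq]
    exact Summable.tsum_le_tsum hble hbsum hCsum.summable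
  calc Real.sqrt (∑' j : ℕ, b j ^ 2) ≤ Real.sqrt (C ^ 2 * (Real.pi ^ 2 / 6)) :=
        Real.sqrt_le_sqrt htsum
    _ = C * (Real.pi / Real.sqrt 6) := by
        rw [Real.sqrt_mul (sq_nonneg C), Real.sqrt_sq hC0,
          Real.sqrt_div (sq_nonneg _), Real.sqrt_sq Real.pi_pos.le]
    _ = Real.pi / Real.sqrt 6 * K * h ^ (2 * n) * S := by rw [hC]; ring
end
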